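/- arXiv:2306.01731 — 10 statements merged into one kernel-verified Lean document; each statement's English description precedes it below -/
import Mathlib

section
/- Let Π be a set of policies, R a set of reward functions, and U : R → Π → ℝ a utility function. Say π₁ is weakly totally dominated by π₂ if for all r₁, r₂ ∈ R, U r₁ π₁ ≤ U r₂ π₂. Assume no policy π satisfies U r₁ π = U r₂ π for all r₁, r₂ ∈ R (i.e., no policy has constant utility over R). Then for any three policies π₁, π₂, π₃, if π₁ is weakly totally dominated by π₂ and π₂ is weakly totally dominated by π₃, then π₃ totally dominates π₁, i.e., for all r₁, r₂ ∈ R, U r₁ π₁ < U r₂ π₃. -/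
/-- Successive weak total domination implies total domination. -/
theorem weak_total_domination_trans {P R : Type*} [Nonempty P] [Nonempty R]
    (U : R → P → ℝ)
    (hnc : ∀ π : P, ∃ r₁ r₂ : R, U r₁ π ≠ U r₂ π)
    (π₁ π₂ π₃ : P)
    (h12 : ∀ r₁ r₂ : R, U r₁ π₁ ≤ U r₂ π₂)
    (h23 : ∀ r₁ r₂ : R, U r₁ π₂ ≤ U r₂ π₃) :
    ∀ r₁ r₂ : R, U r₁ π₁ < U r₂ π₃ := by
  obtain ⟨a, b, hab⟩ := hnc π₂
  intro r₁ r₂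
  rcases lt_or_gt_of_ne hab with h | h
  · exact lt_of_le_of_lt (h12 r₁ a) (lt_of_lt_of_le h (h23 b r₂))
  · exact lt_of_le_of_lt (h12 r₁ b) (lt_of_lt_of_le h (h23 a r₂))
end

section
/- Let Π_nwtd ⊆ Π be the set of policies not weakly totally dominated by any other policy in Π (w.r.t. reward set R and utility U). Assume R and Π are finite and nonempty and Π_nwtd is nonempty. Then min over π ∈ Π_nwtd of (max over r ∈ R of U r π) is strictly greater than max over π ∈ Π_nwtd of (min over r ∈ R of U r π) — hence there exists a nonempty interval 𝕌 ⊆ ℝ such that for every π ∈ Π_nwtd, 𝕌 ⊆ [min_{r∈R} U r π, max_{r∈R} U r π]. -/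
open Finset

/-- The non-weakly-totally-dominated policies share a common nonempty utility interval. -/
theorem nwtd_common_interval {P R : Type*} [Fintype P] [Fintype R] [Nonempty P] [Nonempty R]
    (U : R → P → ℝ)
    (hnc : ∀ π : P, ∃ r₁ r₂ : R, U r₁ π ≠ U r₂ π)
    (N : Finset P)
    (hN : ∀ π : P, π ∈ N ↔ ∀ π' : P, π' ≠ π → ¬ (∀ r₁ r₂ : R, U r₁ π ≤ U r₂ π'))
    (hNne : N.Nonempty) :
    N.sup' hNne (fun π => univ.inf' univ_nonempty (fun r => U r π))
      < N.inf' hNne (fun π => univ.sup' univ_nonempty (fun r => U r π))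
    ∧ ∃ a b : ℝ, a ≤ b ∧ ∀ π ∈ N,
        Set.Icc a b ⊆ Set.Icc (univ.inf' univ_nonempty (fun r => U r π))
          (univ.sup' univ_nonempty (fun r => U r π)) := by
  have key : N.sup' hNne (fun π => univ.inf' univ_nonempty (fun r => U r π))
      < N.inf' hNne (fun π => univ.sup' univ_nonempty (fun r => U r π)) := by
    by_contra h
    push_neg at h
    obtain ⟨π₁, hπ₁, h1⟩ := Finset.exists_mem_eq_sup' hNne
      (fun π => univ.inf' univ_nonempty (fun r => U r π))
    obtain ⟨π₂, hπ₂, h2⟩ := Finset.exists_mem_eq_inf' hNne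
      (fun π => univ.sup' univ_nonempty (fun r => U r π))
    have hle : univ.sup' univ_nonempty (fun r => U r π₂)
        ≤ univ.inf' univ_nonempty (fun r => U r π₁) := by rw [← h1, ← h2]; exact h
    have dom : ∀ r₁ r₂ : R, U r₁ π₂ ≤ U r₂ π₁ := fun r₁ r₂ =>
      le_trans (le_trans (Finset.le_sup' (fun r => U r π₂) (mem_univ r₁)) hle)
        (Finset.inf'_le (fun r => U r π₁) (mem_univ r₂))
    by_cases heq : π₁ = π₂
    · subst heq
      obtain ⟨r₁, r₂, hr⟩ := hnc π₁
      exact hr (le_antisymm (dom r₁ r₂) (dom r₂ r₁))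
    · exact (hN π₂).mp hπ₂ π₁ heq dom
  refine ⟨key, N.sup' hNne (fun π => univ.inf' univ_nonempty (fun r => U r π)),
    N.inf' hNne (fun π => univ.sup' univ_nonempty (fun r => U r π)), key.le,
    fun π hπ => Set.Icc_subset_Icc (Finset.le_sup' (fun π => univ.inf' univ_nonempty (fun r => U r π)) hπ) (Finset.inf'_le (fun π => univ.sup' univ_nonempty (fun r => U r π)) hπ)⟩
end

section
/- For any function f : R → ℝ, the set of minimizers of π ↦ max_{r ∈ R} [max_{π' ∈ Π} (U r π' − f r) − (U r π − f r)] equals the set of minimizers of π ↦ max_{r ∈ R} [max_{π' ∈ Π} U r π' − U r π]. That is, the MinimaxRegret solution is invariant under subtracting any reward-dependent baseline f(r) from the utility. -/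
open Finset

lemma sup'_sub_const {α : Type*} [Fintype α] [Nonempty α] (g : α → ℝ) (c : ℝ) :
    univ.sup' univ_nonempty (fun a => g a - c) = univ.sup' univ_nonempty g - c := by
  apply le_antisymm
  · exact Finset.sup'_le _ _ fun a _ => sub_le_sub_right (Finset.le_sup' g (mem_univ a)) c
  · rw [sub_le_iff_le_add]
    exact Finset.sup'_le _ _ fun a _ => by
      have := Finset.le_sup' (f := fun a => g a - c) (mem_univ a); linarith [this]

/-- MinimaxRegret is invariant under subtracting a reward-dependent baseline `f r`. -/
theorem minimaxRegret_baseline_invariant {P R : Type*} [Fintype P] [Fintype R]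
    [Nonempty P] [Nonempty R]
    (U : R → P → ℝ) (f : R → ℝ) :
    {π : P | ∀ π' : P,
        univ.sup' univ_nonempty
          (fun r => univ.sup' univ_nonempty (fun πa => U r πa - f r) - (U r π - f r))
        ≤ univ.sup' univ_nonempty
          (fun r => univ.sup' univ_nonempty (fun πa => U r πa - f r) - (U r π' - f r))}
    = {π : P | ∀ π' : P,
        univ.sup' univ_nonempty
          (fun r => univ.sup' univ_nonempty (fun πa => U r πa) - U r π)
        ≤ univ.sup' univ_nonempty
          (fun r => univ.sup' univ_nonempty (fun πa => U r πa) - U r π')} := by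
  have key : ∀ (π : P) (r : R),
      univ.sup' univ_nonempty (fun πa => U r πa - f r) - (U r π - f r)
      = univ.sup' univ_nonempty (fun πa => U r πa) - U r π := by
    intro π r
    rw [sup'_sub_const]; ring
  simp only [key]
end

section
/- Task-Failure Avoidance: Let R be a set of reward functions, each r ∈ R either aligned (with success interval S_r and failure interval F_r) or misaligned with a task Φ. Assume (1) at least one r⁺ ∈ R is aligned, and for aligned r⁺: max over aligned r⁺ of (sup F_{r⁺} − inf F_{r⁺}) < min over aligned r⁺ of (inf S_{r⁺} − sup F_{r⁺}), and max over aligned r⁺ of (sup S_{r⁺} − inf S_{r⁺}) < min over aligned r⁺ of (inf S_{r⁺} − sup F_{r⁺}); (2) there exists π* ∈ Π such that for every aligned r⁺, U r⁺ π* ∈ S_{r⁺}, and for every misaligned r⁻ ∈ R, max_{π∈Π} U r⁻ π − U r⁻ π* < min over aligned r⁺ of (inf S_{r⁺} − sup F_{r⁺}). Then any π_P minimizing max_{r∈R} Regret(π, r) satisfies: for every aligned r⁺ ∈ R, U r⁺ π_P ∉ F_{r⁺}. -/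
open Finset

/-- Task-Failure Avoidance: under interval-width conditions and existence of a policy
    performing well under all reward functions, the minimax-regret protagonist policy
    avoids the failure interval of every task-aligned reward function. -/
theorem task_failure_avoidance {P R : Type*} [Fintype P] [Fintype R] [Nonempty P] [Nonempty R]
    (U : R → P → ℝ) (aligned : R → Prop) [DecidablePred aligned]
    (loS hiS loF hiF : R → ℝ)
    (hex : (univ.filter aligned).Nonempty)
    (hint : ∀ r, aligned r → loF r ≤ hiF r ∧ loS r ≤ hiS r ∧ hiF r < loS r ∧
        hiS r = univ.sup' univ_nonempty (fun π => U r π))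
    (hcond1a : (univ.filter aligned).sup' hex (fun r => hiF r - loF r)
        < (univ.filter aligned).inf' hex (fun r => loS r - hiF r))
    (hcond1b : (univ.filter aligned).sup' hex (fun r => hiS r - loS r)
        < (univ.filter aligned).inf' hex (fun r => loS r - hiF r))
    (hcond2 : ∃ πs : P, (∀ r, aligned r → U r πs ∈ Set.Icc (loS r) (hiS r)) ∧
        (∀ r, ¬ aligned r →
          univ.sup' univ_nonempty (fun π => U r π) - U r πs
            < (univ.filter aligned).inf' hex (fun r => loS r - hiF r)))
    (πP : P)
    (hπP : ∀ π : P,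
        univ.sup' univ_nonempty
          (fun r => univ.sup' univ_nonempty (fun π' => U r π') - U r πP)
        ≤ univ.sup' univ_nonempty
          (fun r => univ.sup' univ_nonempty (fun π' => U r π') - U r π)) :
    ∀ r : R, aligned r → U r πP ∉ Set.Icc (loF r) (hiF r) := by
  obtain ⟨πs, hπs1, hπs2⟩ := hcond2
  set m := (univ.filter aligned).inf' hex (fun r => loS r - hiF r) with hm
  have key : ∀ r : R, univ.sup' univ_nonempty (fun π' => U r π') - U r πs < m := by
    intro r
    by_cases hr : aligned r
    · obtain ⟨_, _, _, h4⟩ := hint r hr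
      have hmem : r ∈ univ.filter aligned := by simp [hr]
      have h1 : (hiS r - loS r : ℝ) ≤ (univ.filter aligned).sup' hex (fun r => hiS r - loS r) :=
        le_sup' (fun r => hiS r - loS r) hmem
      have h2 := (hπs1 r hr).1
      calc univ.sup' univ_nonempty (fun π' => U r π') - U r πs
          ≤ hiS r - loS r := by rw [← h4]; linarith
        _ < m := lt_of_le_of_lt h1 hcond1b
    · exact hπs2 r hr
  have hπsmax : univ.sup' univ_nonempty
      (fun r => univ.sup' univ_nonempty (fun π' => U r π') - U r πs) < m := by
    rw [Finset.sup'_lt_iff]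
    intro r _
    exact key r
  have hπPmax : univ.sup' univ_nonempty
      (fun r => univ.sup' univ_nonempty (fun π' => U r π') - U r πP) < m :=
    lt_of_le_of_lt (hπP πs) hπsmax
  intro r hr hmemF
  obtain ⟨_, _, _, h4⟩ := hint r hr
  have hmem : r ∈ univ.filter aligned := by simp [hr]
  have hmle : m ≤ loS r - hiF r := inf'_le _ hmem
  have hle : univ.sup' univ_nonempty (fun π' => U r π') - U r πP
      ≤ univ.sup' univ_nonempty
        (fun r => univ.sup' univ_nonempty (fun π' => U r π') - U r πP) :=
    le_sup' (fun r => univ.sup' univ_nonempty (fun π' => U r π') - U r πP) (mem_univ r)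
  have := hmemF.2
  have hloS : loS r ≤ hiS r := (hint r hr).2.1
  rw [← h4] at hle
  linarith
end

section
/- Task-Success Guarantee: Under the interval-width condition (1) of the Task-Failure Avoidance theorem, if there exists π* ∈ Π such that for every r ∈ R, max_{π∈Π} U r π − U r π* < min over aligned r⁺ ∈ R of (sup S_{r⁺} − inf S_{r⁺}), then any π_P minimizing max_{r∈R} Regret(π, r) satisfies: for every aligned r⁺ ∈ R, U r⁺ π_P ∈ S_{r⁺}. -/
open Finset

/-- Task-Success Guarantee: if some policy is near-optimal under every reward function,
    the minimax-regret protagonist policy lands in the success interval of every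
    task-aligned reward function. -/
theorem task_success_guarantee {P R : Type*} [Fintype P] [Fintype R] [Nonempty P] [Nonempty R]
    (U : R → P → ℝ) (aligned : R → Prop) [DecidablePred aligned]
    (loS hiS loF hiF : R → ℝ)
    (hex : (univ.filter aligned).Nonempty)
    (hint : ∀ r, aligned r → loF r ≤ hiF r ∧ loS r ≤ hiS r ∧ hiF r < loS r ∧
        hiS r = univ.sup' univ_nonempty (fun π => U r π))
    (hcond1a : (univ.filter aligned).sup' hex (fun r => hiF r - loF r)
        < (univ.filter aligned).inf' hex (fun r => loS r - hiF r))
    (hcond1b : (univ.filter aligned).sup' hex (fun r => hiS r - loS r)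
        < (univ.filter aligned).inf' hex (fun r => loS r - hiF r))
    (hcond2 : ∃ πs : P, ∀ r : R,
        univ.sup' univ_nonempty (fun π => U r π) - U r πs
          < (univ.filter aligned).inf' hex (fun r => hiS r - loS r))
    (πP : P)
    (hπP : ∀ π : P,
        univ.sup' univ_nonempty
          (fun r => univ.sup' univ_nonempty (fun π' => U r π') - U r πP)
        ≤ univ.sup' univ_nonempty
          (fun r => univ.sup' univ_nonempty (fun π' => U r π') - U r π)) :
    ∀ r : R, aligned r → U r πP ∈ Set.Icc (loS r) (hiS r) := by
  intro r hr
  obtain ⟨πs, hπs⟩ := hcond2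
  have hmem : r ∈ univ.filter aligned := by simp [hr]
  have hiS_eq := (hint r hr).2.2.2
  have hUle : U r πP ≤ hiS r := by
    rw [hiS_eq]; exact le_sup' _ (mem_univ πP)
  have h1 : univ.sup' univ_nonempty (fun r => univ.sup' univ_nonempty (fun π' => U r π') - U r πs)
      < (univ.filter aligned).inf' hex (fun r => hiS r - loS r) := by
    apply (sup'_lt_iff _).2
    intro r' _
    exact hπs r'
  have h2 : univ.sup' univ_nonempty (fun π' => U r π') - U r πP
      ≤ univ.sup' univ_nonempty (fun r => univ.sup' univ_nonempty (fun π' => U r π') - U r πP) :=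
    le_sup' (fun r => univ.sup' univ_nonempty (fun π' => U r π') - U r πP) (mem_univ r)
  have h3 := (hπP πs).trans_lt h1
  have h4 : univ.sup' univ_nonempty (fun π' => U r π') - U r πP < hiS r - loS r :=
    lt_of_lt_of_le (h2.trans_lt h3) (inf'_le (fun r => hiS r - loS r) hmem)
  rw [← hiS_eq] at h4
  constructor
  · linarith
  · exact hUle
end

section
/- Performance difference lemma for entropy-regularized RL: Given a reward function r and policies π₁, π₂ in an MDP with discount γ ∈ [0,1), U_r(π₁) − U_r(π₂) = E_{τ∼π₁}[Σ_{t≥0} γ^t A_{π₂}(s_t, a_t)] + H(π₂), where A_{π₂} is the soft advantage function of π₂ and H(π₂) = E_{τ∼π₂}[Σ_{t≥0} γ^t H(π₂(·|s_t))] is the discounted entropy of π₂. -/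
open Finset Filter

lemma geom_summable_of_bound (γ C : ℝ) (hγ0 : 0 ≤ γ) (hγ1 : γ < 1)
    (x : ℕ → ℝ) (hx : ∀ t, |x t| ≤ C) : Summable (fun t => γ ^ t * x t) := by
  apply Summable.of_abs
  apply Summable.of_nonneg_of_le (fun t => abs_nonneg _) (fun t => ?_)
    ((summable_geometric_of_lt_one hγ0 hγ1).mul_right C)
  rw [abs_mul, abs_pow, abs_of_nonneg hγ0]
  exact mul_le_mul_of_nonneg_left (hx t) (pow_nonneg hγ0 t)

lemma hasSum_telescoping (g : ℕ → ℝ) (hsum : Summable (fun t => g (t + 1) - g t))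
    (hlim : Tendsto g atTop (nhds 0)) :
    HasSum (fun t => g (t + 1) - g t) (-(g 0)) := by
  rw [hsum.hasSum_iff_tendsto_nat]
  simp only [Finset.sum_range_sub]
  simpa using hlim.sub_const (g 0)

lemma geom_telescope_hasSum (γ : ℝ) (hγ0 : 0 ≤ γ) (hγ1 : γ < 1) (C : ℝ) (f : ℕ → ℝ)
    (hf : ∀ t, |f t| ≤ C) :
    HasSum (fun t => γ ^ (t + 1) * f (t + 1) - γ ^ t * f t) (-(f 0)) := by
  have hb : ∀ t, |γ ^ t * f t| ≤ γ ^ t * C := by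
    intro t
    rw [abs_mul, abs_pow, abs_of_nonneg hγ0]
    exact mul_le_mul_of_nonneg_left (hf t) (pow_nonneg hγ0 t)
  have hmono : ∀ t, γ ^ (t + 1) * C ≤ γ ^ t * C := by
    intro t
    apply mul_le_mul_of_nonneg_right (pow_le_pow_of_le_one hγ0 hγ1.le (Nat.le_succ t))
    exact le_trans (abs_nonneg _) (hf 0)
  have hs : Summable (fun t => γ ^ (t + 1) * f (t + 1) - γ ^ t * f t) := by
    apply Summable.of_abs
    apply Summable.of_nonneg_of_le (fun t => abs_nonneg _) (fun t => ?_)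
      ((summable_geometric_of_lt_one hγ0 hγ1).mul_right (2 * C))
    calc |γ ^ (t + 1) * f (t + 1) - γ ^ t * f t|
        ≤ |γ ^ (t + 1) * f (t + 1)| + |γ ^ t * f t| := abs_sub _ _
      _ ≤ γ ^ t * C + γ ^ t * C := add_le_add ((hb (t + 1)).trans (hmono t)) (hb t)
      _ = γ ^ t * (2 * C) := by ring
  have hlim : Tendsto (fun t => γ ^ t * f t) atTop (nhds 0) := by
    refine squeeze_zero_norm (a := fun t => γ ^ t * C) (fun t => ?_) ?_
    · simpa [Real.norm_eq_abs, abs_mul, abs_pow, abs_of_nonneg hγ0] using hb t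
    · simpa using ((tendsto_pow_atTop_nhds_zero_of_lt_one hγ0 hγ1).mul_const C)
  have := hasSum_telescoping (fun t => γ ^ t * f t) hs hlim
  simpa using this

lemma abs_weighted_sum_le {S : Type*} [Fintype S] (w g : S → ℝ) (h0 : ∀ s, 0 ≤ w s)
    (h1 : ∀ s, w s ≤ 1) : |∑ s, w s * g s| ≤ ∑ s, |g s| := by
  refine (Finset.abs_sum_le_sum_abs _ _).trans (Finset.sum_le_sum fun s _ => ?_)
  rw [abs_mul, abs_of_nonneg (h0 s)]
  exact mul_le_of_le_one_left (abs_nonneg _) (h1 s)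

open Filter in
set_option maxHeartbeats 1000000 in
/-- Performance difference lemma for entropy-regularized RL:
    `U_r(π₁) − U_r(π₂) = E_{τ∼π₁}[Σ γ^t A_{π₂}(s_t,a_t)] + H(π₂)`. -/
theorem perf_difference_entropy_reg {S A : Type*} [Fintype S] [Fintype A]
    (γ : ℝ) (hγ0 : 0 ≤ γ) (hγ1 : γ < 1)
    (r : S → A → ℝ) (d0 : S → ℝ) (Ptr : S → A → S → ℝ)
    (hd0 : (∀ s, 0 ≤ d0 s) ∧ ∑ s, d0 s = 1)
    (hPtr : ∀ s a, (∀ s', 0 ≤ Ptr s a s') ∧ ∑ s', Ptr s a s' = 1)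
    (π₁ π₂ : S → A → ℝ)
    (hπ₁ : ∀ s, (∀ a, 0 ≤ π₁ s a) ∧ ∑ a, π₁ s a = 1)
    (hπ₂ : ∀ s, (∀ a, 0 ≤ π₂ s a) ∧ ∑ a, π₂ s a = 1)
    -- state distribution at each time step
    (d : (S → A → ℝ) → ℕ → S → ℝ)
    (hdzero : ∀ π, d π 0 = d0)
    (hdsucc : ∀ π t s', d π (t + 1) s' = ∑ s, ∑ a, d π t s * π s a * Ptr s a s')
    -- per-state Shannon entropy of a policy
    (Hloc : (S → A → ℝ) → S → ℝ)
    (hHloc : ∀ π s, Hloc π s = ∑ a, -(π s a * Real.log (π s a)))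
    -- soft value functions of π₂
    (Q : S → A → ℝ) (V : S → ℝ)
    (hQ : ∀ s a, Q s a = r s a + γ * ∑ s', Ptr s a s' * V s')
    (hV : ∀ s, V s = (∑ a, π₂ s a * Q s a) + Hloc π₂ s) :
    (∑' t : ℕ, γ ^ t * ∑ s, ∑ a, d π₁ t s * π₁ s a * r s a)
      - (∑' t : ℕ, γ ^ t * ∑ s, ∑ a, d π₂ t s * π₂ s a * r s a)
    = (∑' t : ℕ, γ ^ t * ∑ s, ∑ a, d π₁ t s * π₁ s a * (Q s a - V s))
      + (∑' t : ℕ, γ ^ t * ∑ s, d π₂ t s * Hloc π₂ s) := by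
  -- d π t is a probability distribution
  have hd : ∀ (π : S → A → ℝ), (∀ s, (∀ a, 0 ≤ π s a) ∧ ∑ a, π s a = 1) →
      ∀ t, (∀ s, 0 ≤ d π t s) ∧ ∑ s, d π t s = 1 := by
    intro π hπ t
    induction t with
    | zero => rw [hdzero]; exact hd0
    | succ t ih =>
      constructor
      · intro s'
        rw [hdsucc]
        refine Finset.sum_nonneg fun s _ => Finset.sum_nonneg fun a _ =>
          mul_nonneg (mul_nonneg (ih.1 s) ((hπ s).1 a)) ((hPtr s a).1 s')
      · simp only [hdsucc]
        rw [Finset.sum_comm]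
        calc ∑ s, ∑ s', ∑ a, d π t s * π s a * Ptr s a s'
            = ∑ s, ∑ a, ∑ s', d π t s * π s a * Ptr s a s' :=
              Finset.sum_congr rfl fun s _ => Finset.sum_comm
          _ = ∑ s, ∑ a, d π t s * π s a := by
              refine Finset.sum_congr rfl fun s _ => Finset.sum_congr rfl fun a _ => ?_
              rw [← Finset.mul_sum, (hPtr s a).2, mul_one]
          _ = ∑ s, d π t s := by
              refine Finset.sum_congr rfl fun s _ => ?_
              rw [← Finset.mul_sum, (hπ s).2, mul_one]
          _ = 1 := ih.2
  have hd1 : ∀ (π : S → A → ℝ) (hπ : ∀ s, (∀ a, 0 ≤ π s a) ∧ ∑ a, π s a = 1) (t : ℕ) (s : S),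
      d π t s ≤ 1 := by
    intro π hπ t s
    calc d π t s ≤ ∑ s', d π t s' :=
          Finset.single_le_sum (fun i _ => (hd π hπ t).1 i) (Finset.mem_univ s)
      _ = 1 := (hd π hπ t).2
  have hπle1 : ∀ (π : S → A → ℝ) (hπ : ∀ s, (∀ a, 0 ≤ π s a) ∧ ∑ a, π s a = 1) (s : S) (a : A),
      π s a ≤ 1 := by
    intro π hπ s a
    calc π s a ≤ ∑ a', π s a' :=
          Finset.single_le_sum (fun i _ => (hπ s).1 i) (Finset.mem_univ a)
      _ = 1 := (hπ s).2
  -- bellman flow step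
  have step : ∀ (π : S → A → ℝ) (t : ℕ),
      ∑ s, ∑ a, d π t s * π s a * (γ * ∑ s', Ptr s a s' * V s')
        = γ * ∑ s', d π (t + 1) s' * V s' := by
    intro π t
    have rhs_eq : γ * ∑ s', d π (t + 1) s' * V s'
        = ∑ s, ∑ a, ∑ s', d π t s * π s a * (γ * (Ptr s a s' * V s')) := by
      simp only [hdsucc, Finset.sum_mul, Finset.mul_sum]
      rw [Finset.sum_comm]
      refine Finset.sum_congr rfl fun s _ => ?_
      rw [Finset.sum_comm]
      exact Finset.sum_congr rfl fun a _ => Finset.sum_congr rfl fun s' _ => by ring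
    rw [rhs_eq]
    refine Finset.sum_congr rfl fun s _ => Finset.sum_congr rfl fun a _ => ?_
    rw [Finset.mul_sum, Finset.mul_sum]
  -- marginalization
  have hmarg : ∀ (π : S → A → ℝ) (hπ : ∀ s, (∀ a, 0 ≤ π s a) ∧ ∑ a, π s a = 1) (t : ℕ)
      (g : S → ℝ), ∑ s, ∑ a, d π t s * π s a * g s = ∑ s, d π t s * g s := by
    intro π hπ t g
    refine Finset.sum_congr rfl fun s _ => ?_
    calc ∑ a, d π t s * π s a * g s = (∑ a, d π t s * π s a) * g s := by
          rw [Finset.sum_mul]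
      _ = d π t s * 1 * g s := by rw [← Finset.mul_sum, (hπ s).2]
      _ = d π t s * g s := by ring
  -- key identity for π₁
  have key1 : ∀ t, ∑ s, ∑ a, d π₁ t s * π₁ s a * (Q s a - V s)
      = (∑ s, ∑ a, d π₁ t s * π₁ s a * r s a)
        + (∑ s, d π₁ (t + 1) s * V s) * γ - ∑ s, d π₁ t s * V s := by
    intro t
    have expand : ∀ s a, d π₁ t s * π₁ s a * (Q s a - V s)
        = d π₁ t s * π₁ s a * r s a
          + d π₁ t s * π₁ s a * (γ * ∑ s', Ptr s a s' * V s')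
          - d π₁ t s * π₁ s a * V s := by
      intro s a; rw [hQ]; ring
    simp only [expand, Finset.sum_add_distrib, Finset.sum_sub_distrib]
    rw [step, hmarg π₁ hπ₁ t V]
    ring
  -- key identity for π₂
  have key2 : ∀ t, ∑ s, d π₂ t s * V s
      = (∑ s, ∑ a, d π₂ t s * π₂ s a * r s a)
        + (∑ s, d π₂ (t + 1) s * V s) * γ + ∑ s, d π₂ t s * Hloc π₂ s := by
    intro t
    have expand : ∀ s, d π₂ t s * V s
        = (∑ a, d π₂ t s * π₂ s a * Q s a) + d π₂ t s * Hloc π₂ s := by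
      intro s
      rw [hV, mul_add, Finset.mul_sum]
      congr 1
      exact Finset.sum_congr rfl fun a _ => by ring
    simp only [expand, Finset.sum_add_distrib]
    have expand2 : ∀ s a, d π₂ t s * π₂ s a * Q s a
        = d π₂ t s * π₂ s a * r s a
          + d π₂ t s * π₂ s a * (γ * ∑ s', Ptr s a s' * V s') := by
      intro s a; rw [hQ]; ring
    simp only [expand2, Finset.sum_add_distrib]
    rw [step]
    ring
  -- bounds
  set CV := ∑ s, |V s| with hCV
  set Cr := ∑ s, ∑ a, |r s a| with hCr
  set CH := ∑ s, |Hloc π₂ s| with hCH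
  have hfb : ∀ (π : S → A → ℝ) (hπ : ∀ s, (∀ a, 0 ≤ π s a) ∧ ∑ a, π s a = 1) (t : ℕ),
      |∑ s, d π t s * V s| ≤ CV := fun π hπ t =>
    abs_weighted_sum_le _ _ (fun s => (hd π hπ t).1 s) (fun s => hd1 π hπ t s)
  have hRb : ∀ (π : S → A → ℝ) (hπ : ∀ s, (∀ a, 0 ≤ π s a) ∧ ∑ a, π s a = 1) (t : ℕ),
      |∑ s, ∑ a, d π t s * π s a * r s a| ≤ Cr := by
    intro π hπ t
    refine (Finset.abs_sum_le_sum_abs _ _).trans (Finset.sum_le_sum fun s _ => ?_)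
    refine abs_weighted_sum_le (fun a => d π t s * π s a) (fun a => r s a)
      (fun a => mul_nonneg ((hd π hπ t).1 s) ((hπ s).1 a)) (fun a => ?_)
    exact mul_le_one₀ (hd1 π hπ t s) ((hπ s).1 a) (hπle1 π hπ s a)
  have hHb : ∀ t, |∑ s, d π₂ t s * Hloc π₂ s| ≤ CH := fun t =>
    abs_weighted_sum_le _ _ (fun s => (hd π₂ hπ₂ t).1 s) (fun s => hd1 π₂ hπ₂ t s)
  -- summabilities
  have hSR₁ : Summable (fun t : ℕ => γ ^ t * ∑ s, ∑ a, d π₁ t s * π₁ s a * r s a) :=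
    geom_summable_of_bound γ Cr hγ0 hγ1 _ (hRb π₁ hπ₁)
  have hSR₂ : Summable (fun t : ℕ => γ ^ t * ∑ s, ∑ a, d π₂ t s * π₂ s a * r s a) :=
    geom_summable_of_bound γ Cr hγ0 hγ1 _ (hRb π₂ hπ₂)
  have hSH : Summable (fun t : ℕ => γ ^ t * ∑ s, d π₂ t s * Hloc π₂ s) :=
    geom_summable_of_bound γ CH hγ0 hγ1 _ hHb
  -- telescoping sums
  have tel₁ := geom_telescope_hasSum γ hγ0 hγ1 CV (fun t => ∑ s, d π₁ t s * V s) (hfb π₁ hπ₁)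
  have tel₂ := geom_telescope_hasSum γ hγ0 hγ1 CV (fun t => ∑ s, d π₂ t s * V s) (hfb π₂ hπ₂)
  -- main HasSum for the advantage term
  have hA : HasSum (fun t : ℕ => γ ^ t * ∑ s, ∑ a, d π₁ t s * π₁ s a * (Q s a - V s))
      ((∑' t : ℕ, γ ^ t * ∑ s, ∑ a, d π₁ t s * π₁ s a * r s a)
        + -(∑ s, d π₁ 0 s * V s)) := by
    have h := hSR₁.hasSum.add tel₁
    have heq : (fun t : ℕ => γ ^ t * ∑ s, ∑ a, d π₁ t s * π₁ s a * (Q s a - V s))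
        = fun t : ℕ => γ ^ t * (∑ s, ∑ a, d π₁ t s * π₁ s a * r s a)
            + (γ ^ (t + 1) * (∑ s, d π₁ (t + 1) s * V s) - γ ^ t * ∑ s, d π₁ t s * V s) := by
      funext t
      rw [key1 t, pow_succ]
      ring
    rw [heq]
    simpa using h
  -- HasSum for the π₂ reward term
  have hR₂ : HasSum (fun t : ℕ => γ ^ t * ∑ s, ∑ a, d π₂ t s * π₂ s a * r s a)
      ((∑ s, d π₂ 0 s * V s) - ∑' t : ℕ, γ ^ t * ∑ s, d π₂ t s * Hloc π₂ s) := by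
    have h := (tel₂.neg).sub hSH.hasSum
    have heq : (fun t : ℕ => γ ^ t * ∑ s, ∑ a, d π₂ t s * π₂ s a * r s a)
        = fun t : ℕ => -(γ ^ (t + 1) * (∑ s, d π₂ (t + 1) s * V s)
              - γ ^ t * ∑ s, d π₂ t s * V s)
            - γ ^ t * ∑ s, d π₂ t s * Hloc π₂ s := by
      funext t
      have h2 := key2 t
      have : γ ^ t * ∑ s, d π₂ t s * V s
          = γ ^ t * ((∑ s, ∑ a, d π₂ t s * π₂ s a * r s a)
              + (∑ s, d π₂ (t + 1) s * V s) * γ + ∑ s, d π₂ t s * Hloc π₂ s) := by rw [← h2]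
      rw [pow_succ]
      nlinarith [this]
    rw [heq]
    simpa using h
  rw [hA.tsum_eq, hR₂.tsum_eq]
  simp only [hdzero]
  ring
end

section
/- If policies π₁ and π₂ are α-coupled (i.e., there is a coupling of their action distributions at each state s with P(a ≠ ã | s) ≤ α), and A_{π₂} is bounded with ε = max_{s,a} |A_{π₂}(s,a)|, then for all states s, |ΔA(s)| ≤ 2α·max_a |A_{π₂}(s,a)|, where ΔA(s) = E_{a∼π₁(·|s)}[A_{π₂}(s,a)] − E_{a∼π₂(·|s)}[A_{π₂}(s,a)]. -/
open Finset

/-- For α-coupled policies, the advantage-difference at each state is bounded: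
    `|ΔA(s)| ≤ 2α max_a |A_{π₂}(s,a)|`. -/
theorem alpha_coupled_advantage_bound {S A : Type*} [Fintype A] [Nonempty A] [DecidableEq A]
    (π₁ π₂ : S → A → ℝ) (Adv : S → A → ℝ) (α : ℝ)
    (J : S → A → A → ℝ)
    (hJnn : ∀ s a b, 0 ≤ J s a b)
    (hm1 : ∀ s a, ∑ b, J s a b = π₁ s a)
    (hm2 : ∀ s b, ∑ a, J s a b = π₂ s b)
    (hdis : ∀ s, (∑ a, ∑ b, if a = b then 0 else J s a b) ≤ α) :
    ∀ s, |(∑ a, π₁ s a * Adv s a) - (∑ a, π₂ s a * Adv s a)|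
      ≤ 2 * α * univ.sup' univ_nonempty (fun a => |Adv s a|) := by
  intro s
  set M := univ.sup' univ_nonempty (fun a => |Adv s a|) with hMdef
  have hM : ∀ a, |Adv s a| ≤ M := fun a => le_sup' (fun a => |Adv s a|) (mem_univ a)
  have hM0 : 0 ≤ M := le_trans (abs_nonneg _) (hM (Classical.arbitrary A))
  have key : (∑ a, π₁ s a * Adv s a) - (∑ a, π₂ s a * Adv s a)
      = ∑ a, ∑ b, J s a b * (Adv s a - Adv s b) := by
    have h1 : (∑ a, π₁ s a * Adv s a) = ∑ a, ∑ b, J s a b * Adv s a := by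
      refine Finset.sum_congr rfl fun a _ => ?_
      rw [← hm1 s a, Finset.sum_mul]
    have h2 : (∑ b, π₂ s b * Adv s b) = ∑ a, ∑ b, J s a b * Adv s b := by
      rw [Finset.sum_comm]
      refine Finset.sum_congr rfl fun b _ => ?_
      rw [← hm2 s b, Finset.sum_mul]
    rw [h1, h2, ← Finset.sum_sub_distrib]
    refine Finset.sum_congr rfl fun a _ => ?_
    rw [← Finset.sum_sub_distrib]
    refine Finset.sum_congr rfl fun b _ => ?_
    ring
  rw [key]
  calc |∑ a, ∑ b, J s a b * (Adv s a - Adv s b)|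
      ≤ ∑ a, ∑ b, |J s a b * (Adv s a - Adv s b)| := by
        refine le_trans (Finset.abs_sum_le_sum_abs _ _) ?_
        exact Finset.sum_le_sum fun a _ => Finset.abs_sum_le_sum_abs _ _
    _ ≤ ∑ a, ∑ b, (if a = b then 0 else J s a b) * (2 * M) := by
        refine Finset.sum_le_sum fun a _ => Finset.sum_le_sum fun b _ => ?_
        by_cases hab : a = b
        · simp [hab]
        · rw [if_neg hab, abs_mul, abs_of_nonneg (hJnn s a b)]
          refine mul_le_mul_of_nonneg_left ?_ (hJnn s a b)
          calc |Adv s a - Adv s b| ≤ |Adv s a| + |Adv s b| := abs_sub _ _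
            _ ≤ M + M := add_le_add (hM a) (hM b)
            _ = 2 * M := by ring
    _ = (∑ a, ∑ b, if a = b then 0 else J s a b) * (2 * M) := by
        rw [Finset.sum_mul]
        exact Finset.sum_congr rfl fun a _ => (Finset.sum_mul _ _ _).symm
    _ ≤ α * (2 * M) := by
        refine mul_le_mul_of_nonneg_right (hdis s) (by positivity)
    _ = 2 * α * M := by ring
end

section
/- If π₁ and π₂ are α-coupled policies and n_t counts disagreements of sampled actions before time t, then |E_{s_t∼π₁, a_t∼π₂}[A_{π₂}(s_t,a_t)] − E_{s_t∼π₂, a_t∼π₂}[A_{π₂}(s_t,a_t)]| ≤ 2(1 − (1−α)^t)·max_{s,a}|A_{π₂}(s,a)|, using that the probability that π₁ and π₂ disagreed at some step before t is at most 1 − (1−α)^t. -/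
open Finset

/-- Cross-term bound for α-coupled policies: if the time-`t` state distributions of the
    two policies admit a coupling with disagreement probability at most `1 − (1−α)^t`, then
    the difference of expected advantages (with actions from `π₂`) is bounded by
    `2(1 − (1−α)^t) max_{s,a} |A_{π₂}(s,a)|`. -/
theorem alpha_coupled_cross_term_bound {S A : Type*} [Fintype S] [Nonempty S] [DecidableEq S]
    [Fintype A] [Nonempty A]
    (π₂ : S → A → ℝ)
    (hπ₂ : ∀ s, (∀ a, 0 ≤ π₂ s a) ∧ ∑ a, π₂ s a = 1)
    (Adv : S → A → ℝ) (α : ℝ) (hα0 : 0 ≤ α) (hα1 : α ≤ 1) (t : ℕ)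
    (d₁ d₂ : S → ℝ)
    (J : S → S → ℝ)
    (hJnn : ∀ s s', 0 ≤ J s s')
    (hm1 : ∀ s, ∑ s', J s s' = d₁ s)
    (hm2 : ∀ s', ∑ s, J s s' = d₂ s')
    (hdis : (∑ s, ∑ s', if s = s' then 0 else J s s') ≤ 1 - (1 - α) ^ t) :
    |(∑ s, d₁ s * ∑ a, π₂ s a * Adv s a) - (∑ s, d₂ s * ∑ a, π₂ s a * Adv s a)|
      ≤ 2 * (1 - (1 - α) ^ t) *
        (univ.sup' univ_nonempty fun s => univ.sup' univ_nonempty fun a => |Adv s a|) := by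
  classical
  set M : ℝ := univ.sup' univ_nonempty fun s => univ.sup' univ_nonempty fun a => |Adv s a| with hM
  set f : S → ℝ := fun s => ∑ a, π₂ s a * Adv s a with hf
  have hAdvM : ∀ s a, |Adv s a| ≤ M := by
    intro s a
    exact le_trans (le_sup' (fun a => |Adv s a|) (mem_univ a))
      (le_sup' (fun s => univ.sup' univ_nonempty fun a => |Adv s a|) (mem_univ s))
  have hfM : ∀ s, |f s| ≤ M := by
    intro s
    calc |f s| ≤ ∑ a, |π₂ s a * Adv s a| := Finset.abs_sum_le_sum_abs _ _
    _ ≤ ∑ a, π₂ s a * M := by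
        apply Finset.sum_le_sum
        intro a _
        rw [abs_mul, abs_of_nonneg ((hπ₂ s).1 a)]
        exact mul_le_mul_of_nonneg_left (hAdvM s a) ((hπ₂ s).1 a)
    _ = M := by rw [← Finset.sum_mul, (hπ₂ s).2, one_mul]
  have h1 : (∑ s, d₁ s * f s) = ∑ s, ∑ s', J s s' * f s := by
    apply Finset.sum_congr rfl
    intro s _
    rw [← hm1 s, Finset.sum_mul]
  have h2 : (∑ s, d₂ s * f s) = ∑ s, ∑ s', J s s' * f s' := by
    rw [Finset.sum_comm]
    apply Finset.sum_congr rfl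
    intro s' _
    rw [← hm2 s', Finset.sum_mul]
  have key : (∑ s, d₁ s * f s) - (∑ s, d₂ s * f s)
      = ∑ s, ∑ s', (if s = s' then 0 else J s s') * (f s - f s') := by
    rw [h1, h2, ← Finset.sum_sub_distrib]
    apply Finset.sum_congr rfl
    intro s _
    rw [← Finset.sum_sub_distrib]
    apply Finset.sum_congr rfl
    intro s' _
    by_cases h : s = s'
    · simp [h]
    · simp [h]; ring
  rw [key]
  calc |∑ s, ∑ s', (if s = s' then 0 else J s s') * (f s - f s')|
      ≤ ∑ s, ∑ s', |(if s = s' then 0 else J s s') * (f s - f s')| := by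
        refine le_trans (Finset.abs_sum_le_sum_abs _ _) ?_
        exact Finset.sum_le_sum fun s _ => Finset.abs_sum_le_sum_abs _ _
    _ ≤ ∑ s, ∑ s', (if s = s' then 0 else J s s') * (2 * M) := by
        apply Finset.sum_le_sum; intro s _
        apply Finset.sum_le_sum; intro s' _
        rw [abs_mul]
        have hnn : (0:ℝ) ≤ if s = s' then 0 else J s s' := by
          split_ifs
          · exact le_rfl
          · exact hJnn s s'
        rw [abs_of_nonneg hnn]
        apply mul_le_mul_of_nonneg_left _ hnn
        calc |f s - f s'| ≤ |f s| + |f s'| := abs_sub _ _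
          _ ≤ M + M := add_le_add (hfM s) (hfM s')
          _ = 2 * M := by ring
    _ = (∑ s, ∑ s', if s = s' then 0 else J s s') * (2 * M) := by
        rw [Finset.sum_mul]
        apply Finset.sum_congr rfl
        intro s _
        rw [Finset.sum_mul]
    _ ≤ (1 - (1 - α) ^ t) * (2 * M) := by
        apply mul_le_mul_of_nonneg_right hdis
        have hM0 : 0 ≤ M := le_trans (abs_nonneg _) (hAdvM Classical.ofNonempty Classical.ofNonempty)
        linarith
    _ = 2 * (1 - (1 - α) ^ t) * M := by ring
end

section
/- Regret bound (on-policy form): Let π₂ be the optimal policy for entropy-regularized RL under reward r, π₁ any policy, α = max_s D_TV(π₁(·|s), π₂(·|s)), ε = max_{s,a}|A_{π₂}(s,a)|, and ΔA(s) = E_{a∼π₁}[A_{π₂}(s,a)] − E_{a∼π₂}[A_{π₂}(s,a)]. Then |U_r(π₁) − U_r(π₂) − Σ_{t≥0} γ^t E_{s_t∼π₁}[ΔA(s_t)]| ≤ 2αγε/(1−γ)². -/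
/-
Since `Q = r + γ P V`, one discounted reward step of any policy `π` equals its expected soft
advantage `E_{a∼π}[Q − V]` plus a telescoping difference of discounted values, whence
`U_r(π) = Σ_t γ^t E_{s_t∼π}[E_{a∼π}(Q − V)] + E_{d₀}[V]`.
Subtracting this identity for `π₂` from the one for `π₁` leaves
`Σ_t γ^t Σ_s (d_t^{π₁} − d_t^{π₂})(s) E_{a∼π₂}[Q − V](s)`. One step of the chain moves the two
state distributions apart by at most `2α` in `ℓ¹`, so `‖d_t^{π₁} − d_t^{π₂}‖₁ ≤ 2tα`, and
`Σ_t 2tαε γ^t = 2αγε/(1−γ)²`.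
-/

open Finset

lemma abs_sum_mul_le_of_sum_eq_one {ι : Type*} [Fintype ι] {w u : ι → ℝ} {C : ℝ}
    (hw : ∀ i, 0 ≤ w i) (hw1 : ∑ i, w i = 1) (hu : ∀ i, |u i| ≤ C) :
    |∑ i, w i * u i| ≤ C :=
  calc |∑ i, w i * u i| ≤ ∑ i, w i * C :=
        (abs_sum_le_sum_abs _ _).trans <| sum_le_sum fun i _ => by
          rw [abs_mul, abs_of_nonneg (hw i)]
          exact mul_le_mul_of_nonneg_left (hu i) (hw i)
    _ = C := by rw [← sum_mul, hw1, one_mul]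

lemma abs_sum_mul_le_sum_abs_mul {ι : Type*} [Fintype ι] {x u : ι → ℝ} {C : ℝ}
    (hu : ∀ i, |u i| ≤ C) : |∑ i, x i * u i| ≤ (∑ i, |x i|) * C :=
  calc |∑ i, x i * u i| ≤ ∑ i, |x i| * C :=
        (abs_sum_le_sum_abs _ _).trans <| sum_le_sum fun i _ => by
          rw [abs_mul]
          exact mul_le_mul_of_nonneg_left (hu i) (abs_nonneg _)
    _ = (∑ i, |x i|) * C := (sum_mul _ _ _).symm

lemma tsum_sub_succ_eq {f : ℕ → ℝ} (hf : Summable f) : ∑' t, (f t - f (t + 1)) = f 0 := by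
  rw [hf.tsum_sub ((summable_nat_add_iff 1).2 hf), hf.tsum_eq_zero_add, add_sub_cancel_right]

lemma summable_geometric_mul_of_abs_le {γ : ℝ} (hγ0 : 0 ≤ γ) (hγ1 : γ < 1) {u : ℕ → ℝ} {C : ℝ}
    (hu : ∀ t, |u t| ≤ C) :
    Summable fun t => γ ^ t * u t :=
  ((summable_geometric_of_lt_one hγ0 hγ1).mul_right C).of_norm_bounded fun t => by
    rw [Real.norm_eq_abs, abs_mul, abs_of_nonneg (pow_nonneg hγ0 t)]
    exact mul_le_mul_of_nonneg_left (hu t) (pow_nonneg hγ0 t)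

lemma abs_tsum_le_of_abs_le_mul_coe_mul_geometric {γ : ℝ} (hγ0 : 0 ≤ γ) (hγ1 : γ < 1)
    {c : ℕ → ℝ} {K : ℝ} (hc : ∀ t, |c t| ≤ K * (t * γ ^ t)) :
    |∑' t, c t| ≤ K * γ / (1 - γ) ^ 2 := by
  have hγ : ‖γ‖ < 1 := by rwa [Real.norm_eq_abs, abs_of_nonneg hγ0]
  have := tsum_of_norm_bounded ((hasSum_coe_mul_geometric_of_norm_lt_one hγ).mul_left K)
    (f := c) hc
  rwa [Real.norm_eq_abs, ← mul_div_assoc] at this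

section MarkovChain

variable {S A : Type*} [Fintype S] [Fintype A] {P : S → A → S → ℝ}

lemma sum_kernel_mul_eq (w : S → A → ℝ) (V : S → ℝ) :
    ∑ s', (∑ s, ∑ a, w s a * P s a s') * V s' = ∑ s, ∑ a, w s a * ∑ s', P s a s' * V s' := by
  simp only [sum_mul, mul_sum]
  rw [sum_comm]
  refine sum_congr rfl fun s _ => ?_
  rw [sum_comm]
  exact sum_congr rfl fun a _ => sum_congr rfl fun s' _ => by ring

lemma sum_kernel_eq (hP : ∀ s a, ∑ s', P s a s' = 1) (w : S → A → ℝ) :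
    ∑ s', ∑ s, ∑ a, w s a * P s a s' = ∑ s, ∑ a, w s a := by
  simpa [hP] using sum_kernel_mul_eq (P := P) w 1

variable {π : S → A → ℝ} {d : ℕ → S → ℝ}

lemma stateDist_nonneg_and_sum_eq_one
    (hd : ∀ t s', d (t + 1) s' = ∑ s, ∑ a, d t s * π s a * P s a s')
    (hP : ∀ s a, (∀ s', 0 ≤ P s a s') ∧ ∑ s', P s a s' = 1)
    (hπ : ∀ s, (∀ a, 0 ≤ π s a) ∧ ∑ a, π s a = 1)
    (hd0 : (∀ s, 0 ≤ d 0 s) ∧ ∑ s, d 0 s = 1) :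
    ∀ t, (∀ s, 0 ≤ d t s) ∧ ∑ s, d t s = 1 := by
  intro t
  induction t with
  | zero => exact hd0
  | succ t ih =>
    refine ⟨fun s' => ?_, ?_⟩
    · rw [hd]
      exact sum_nonneg fun s _ => sum_nonneg fun a _ =>
        mul_nonneg (mul_nonneg (ih.1 s) ((hπ s).1 a)) ((hP s a).1 s')
    · have hrow (s : S) : ∑ a, d t s * π s a = d t s := by
        rw [← mul_sum, (hπ s).2, mul_one]
      simp only [hd, sum_kernel_eq fun s a => (hP s a).2, hrow, ih.2]

lemma summable_discounted_expectation {γ : ℝ} (hγ0 : 0 ≤ γ) (hγ1 : γ < 1)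
    (hprob : ∀ t, (∀ s, 0 ≤ d t s) ∧ ∑ s, d t s = 1) (g : S → ℝ) :
    Summable fun t => γ ^ t * ∑ s, d t s * g s :=
  summable_geometric_mul_of_abs_le hγ0 hγ1 fun t =>
    abs_sum_mul_le_of_sum_eq_one (hprob t).1 (hprob t).2 fun s =>
      single_le_sum (f := fun s => |g s|) (fun _ _ => abs_nonneg _) (mem_univ s)

lemma sum_reward_eq_advantage_add {γ : ℝ} {r Q : S → A → ℝ} {V : S → ℝ}
    (hd : ∀ t s', d (t + 1) s' = ∑ s, ∑ a, d t s * π s a * P s a s')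
    (hπ : ∀ s, ∑ a, π s a = 1) (hQ : ∀ s a, Q s a = r s a + γ * ∑ s', P s a s' * V s')
    (t : ℕ) :
    ∑ s, ∑ a, d t s * π s a * r s a
      = ∑ s, d t s * ∑ a, π s a * (Q s a - V s)
        + (∑ s, d t s * V s - γ * ∑ s, d (t + 1) s * V s) := by
  have hV (s : S) : d t s * V s = ∑ a, d t s * π s a * V s := by
    rw [← sum_mul, ← mul_sum, hπ s, mul_one]
  have hnext : γ * ∑ s', d (t + 1) s' * V s'
      = ∑ s, ∑ a, d t s * π s a * (γ * ∑ s', P s a s' * V s') := by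
    simp only [hd, sum_kernel_mul_eq, mul_sum, mul_left_comm γ]
  rw [hnext]
  simp only [hV, ← sum_sub_distrib, ← sum_add_distrib]
  refine sum_congr rfl fun s _ => ?_
  rw [mul_sum, ← sum_add_distrib]
  exact sum_congr rfl fun a _ => by rw [hQ]; ring

theorem tsum_discounted_reward_eq {γ : ℝ} (hγ0 : 0 ≤ γ) (hγ1 : γ < 1) {r Q : S → A → ℝ}
    {V : S → ℝ} (hd : ∀ t s', d (t + 1) s' = ∑ s, ∑ a, d t s * π s a * P s a s')
    (hprob : ∀ t, (∀ s, 0 ≤ d t s) ∧ ∑ s, d t s = 1)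
    (hπ : ∀ s, ∑ a, π s a = 1) (hQ : ∀ s a, Q s a = r s a + γ * ∑ s', P s a s' * V s') :
    ∑' t, γ ^ t * ∑ s, ∑ a, d t s * π s a * r s a
      = ∑' t, γ ^ t * ∑ s, d t s * ∑ a, π s a * (Q s a - V s) + ∑ s, d 0 s * V s := by
  set F : ℕ → ℝ := fun t => γ ^ t * ∑ s, d t s * V s
  have hF : Summable F := summable_discounted_expectation hγ0 hγ1 hprob V
  have hstep (t : ℕ) : γ ^ t * ∑ s, ∑ a, d t s * π s a * r s a
      = γ ^ t * ∑ s, d t s * ∑ a, π s a * (Q s a - V s) + (F t - F (t + 1)) := by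
    rw [sum_reward_eq_advantage_add hd hπ hQ]
    ring
  rw [tsum_congr hstep, (summable_discounted_expectation hγ0 hγ1 hprob _).tsum_add
    (hF.sub ((summable_nat_add_iff 1).2 hF)), tsum_sub_succ_eq hF]
  simp [F]

lemma sum_abs_succ_sub_le {π' : S → A → ℝ} {d' : ℕ → S → ℝ}
    (hP : ∀ s a, (∀ s', 0 ≤ P s a s') ∧ ∑ s', P s a s' = 1)
    (hπ : ∀ s, (∀ a, 0 ≤ π s a) ∧ ∑ a, π s a = 1) (hd'0 : ∀ t s, 0 ≤ d' t s)
    (hd : ∀ t s', d (t + 1) s' = ∑ s, ∑ a, d t s * π s a * P s a s')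
    (hd' : ∀ t s', d' (t + 1) s' = ∑ s, ∑ a, d' t s * π' s a * P s a s') (t : ℕ) :
    ∑ s, |d (t + 1) s - d' (t + 1) s|
      ≤ ∑ s, |d t s - d' t s| + ∑ s, d' t s * ∑ a, |π s a - π' s a| := by
  have hsplit (s : S) (a : A) : |d t s * π s a - d' t s * π' s a|
      ≤ |d t s - d' t s| * π s a + d' t s * |π s a - π' s a| := by
    rw [show d t s * π s a - d' t s * π' s a
        = (d t s - d' t s) * π s a + d' t s * (π s a - π' s a) by ring]
    refine (abs_add_le _ _).trans_eq ?_
    rw [abs_mul, abs_mul, abs_of_nonneg ((hπ s).1 a), abs_of_nonneg (hd'0 t s)]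
  have hrow (s : S) : ∑ a, |d t s - d' t s| * π s a = |d t s - d' t s| := by
    rw [← mul_sum, (hπ s).2, mul_one]
  calc ∑ s', |d (t + 1) s' - d' (t + 1) s'|
      = ∑ s', |∑ s, ∑ a, (d t s * π s a - d' t s * π' s a) * P s a s'| := by
        simp only [hd, hd', ← sum_sub_distrib, sub_mul]
    _ ≤ ∑ s', ∑ s, ∑ a, |d t s * π s a - d' t s * π' s a| * P s a s' := by
        refine sum_le_sum fun s' _ => (abs_sum_le_sum_abs _ _).trans <| sum_le_sum fun s _ =>
          (abs_sum_le_sum_abs _ _).trans <| sum_le_sum fun a _ => ?_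
        rw [abs_mul, abs_of_nonneg ((hP s a).1 s')]
    _ = ∑ s, ∑ a, |d t s * π s a - d' t s * π' s a| :=
        sum_kernel_eq (fun s a => (hP s a).2) _
    _ ≤ ∑ s, ∑ a, (|d t s - d' t s| * π s a + d' t s * |π s a - π' s a|) := by
        gcongr with s _ a _
        exact hsplit s a
    _ = ∑ s, |d t s - d' t s| + ∑ s, d' t s * ∑ a, |π s a - π' s a| := by
        simp only [sum_add_distrib, hrow, ← mul_sum]

lemma sum_abs_sub_le_nat_mul {π' : S → A → ℝ} {d' : ℕ → S → ℝ} {δ : ℝ}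
    (hP : ∀ s a, (∀ s', 0 ≤ P s a s') ∧ ∑ s', P s a s' = 1)
    (hπ : ∀ s, (∀ a, 0 ≤ π s a) ∧ ∑ a, π s a = 1)
    (hprob' : ∀ t, (∀ s, 0 ≤ d' t s) ∧ ∑ s, d' t s = 1)
    (hd : ∀ t s', d (t + 1) s' = ∑ s, ∑ a, d t s * π s a * P s a s')
    (hd' : ∀ t s', d' (t + 1) s' = ∑ s, ∑ a, d' t s * π' s a * P s a s')
    (h0 : d 0 = d' 0) (hδ : ∀ s, ∑ a, |π s a - π' s a| ≤ δ) (t : ℕ) :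
    ∑ s, |d t s - d' t s| ≤ t * δ := by
  induction t with
  | zero => simp [h0]
  | succ t ih =>
    have hmix : ∑ s, d' t s * ∑ a, |π s a - π' s a| ≤ δ :=
      (le_abs_self _).trans <| abs_sum_mul_le_of_sum_eq_one (hprob' t).1 (hprob' t).2 fun s =>
        (abs_of_nonneg (sum_nonneg fun _ _ => abs_nonneg _)).trans_le (hδ s)
    have := sum_abs_succ_sub_le hP hπ (fun t => (hprob' t).1) hd hd' t
    push_cast
    linarith

theorem tsum_reward_sub_sub_eq {π' : S → A → ℝ} {d' : ℕ → S → ℝ} {γ : ℝ} (hγ0 : 0 ≤ γ)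
    (hγ1 : γ < 1) {r Q : S → A → ℝ} {V : S → ℝ}
    (hd : ∀ t s', d (t + 1) s' = ∑ s, ∑ a, d t s * π s a * P s a s')
    (hd' : ∀ t s', d' (t + 1) s' = ∑ s, ∑ a, d' t s * π' s a * P s a s')
    (hprob : ∀ t, (∀ s, 0 ≤ d t s) ∧ ∑ s, d t s = 1)
    (hprob' : ∀ t, (∀ s, 0 ≤ d' t s) ∧ ∑ s, d' t s = 1)
    (hπ : ∀ s, ∑ a, π s a = 1) (hπ' : ∀ s, ∑ a, π' s a = 1)
    (hQ : ∀ s a, Q s a = r s a + γ * ∑ s', P s a s' * V s') (h0 : d 0 = d' 0) :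
    ((∑' t, γ ^ t * ∑ s, ∑ a, d t s * π s a * r s a)
        - (∑' t, γ ^ t * ∑ s, ∑ a, d' t s * π' s a * r s a))
      - (∑' t, γ ^ t * ∑ s, d t s * (∑ a, (π s a - π' s a) * (Q s a - V s)))
      = ∑' t, γ ^ t * ∑ s, (d t s - d' t s) * ∑ a, π' s a * (Q s a - V s) := by
  have hsum := summable_discounted_expectation hγ0 hγ1 hprob
  have hsum' := summable_discounted_expectation hγ0 hγ1 hprob'
  rw [tsum_discounted_reward_eq hγ0 hγ1 hd hprob hπ hQ,
    tsum_discounted_reward_eq hγ0 hγ1 hd' hprob' hπ' hQ, h0, add_sub_add_right_eq_sub,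
    ← (hsum _).tsum_sub (hsum' _), ← ((hsum _).sub (hsum' _)).tsum_sub (hsum _)]
  refine tsum_congr fun t => ?_
  simp only [sub_mul, mul_sub, sum_sub_distrib]
  ring

end MarkovChain

theorem regret_bound_on_policy_general {S A : Type*} [Fintype S] [Nonempty S] [Fintype A] [Nonempty A]
    (γ : ℝ) (hγ0 : 0 ≤ γ) (hγ1 : γ < 1)
    (r : S → A → ℝ) (d0 : S → ℝ) (Ptr : S → A → S → ℝ)
    (hd0 : (∀ s, 0 ≤ d0 s) ∧ ∑ s, d0 s = 1)
    (hPtr : ∀ s a, (∀ s', 0 ≤ Ptr s a s') ∧ ∑ s', Ptr s a s' = 1)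
    (π₁ π₂ : S → A → ℝ)
    (hπ₁ : ∀ s, (∀ a, 0 ≤ π₁ s a) ∧ ∑ a, π₁ s a = 1)
    (hπ₂ : ∀ s, (∀ a, 0 ≤ π₂ s a) ∧ ∑ a, π₂ s a = 1)
    (d : (S → A → ℝ) → ℕ → S → ℝ)
    (hdzero : ∀ π, d π 0 = d0)
    (hdsucc : ∀ π t s', d π (t + 1) s' = ∑ s, ∑ a, d π t s * π s a * Ptr s a s')
    -- soft value functions of π₂
    (Q : S → A → ℝ) (V : S → ℝ)
    (hQ : ∀ s a, Q s a = r s a + γ * ∑ s', Ptr s a s' * V s')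
    -- α : maximal total-variation distance between π₁ and π₂; ε : maximal |A_{π₂}|
    (α ε : ℝ)
    (hα : α = univ.sup' univ_nonempty (fun s => (∑ a, |π₁ s a - π₂ s a|) / 2))
    (hε : ε = univ.sup' univ_nonempty
        (fun s => univ.sup' univ_nonempty (fun a => |Q s a - V s|))) :
    |((∑' t : ℕ, γ ^ t * ∑ s, ∑ a, d π₁ t s * π₁ s a * r s a)
        - (∑' t : ℕ, γ ^ t * ∑ s, ∑ a, d π₂ t s * π₂ s a * r s a))
      - (∑' t : ℕ, γ ^ t * ∑ s, d π₁ t s *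
          (∑ a, (π₁ s a - π₂ s a) * (Q s a - V s)))|
      ≤ 2 * α * γ * ε / (1 - γ) ^ 2 := by
  have hprob {π : S → A → ℝ} (hπ : ∀ s, (∀ a, 0 ≤ π s a) ∧ ∑ a, π s a = 1) :=
    stateDist_nonneg_and_sum_eq_one (hdsucc π) hPtr hπ (hdzero π ▸ hd0)
  have hTV (s : S) : ∑ a, |π₁ s a - π₂ s a| ≤ 2 * α := by
    have := hα ▸ le_sup' (fun s => (∑ a, |π₁ s a - π₂ s a|) / 2) (mem_univ s)
    linarith
  set g : S → ℝ := fun s => ∑ a, π₂ s a * (Q s a - V s)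
  have hg (s : S) : |g s| ≤ ε :=
    abs_sum_mul_le_of_sum_eq_one (hπ₂ s).1 (hπ₂ s).2 fun a => hε ▸
      (le_sup' (fun a => |Q s a - V s|) (mem_univ a)).trans
        (le_sup' (fun s => univ.sup' univ_nonempty fun a => |Q s a - V s|) (mem_univ s))
  have hε0 : 0 ≤ ε := (abs_nonneg _).trans (hg Classical.ofNonempty)
  have h0 : d π₁ 0 = d π₂ 0 := (hdzero π₁).trans (hdzero π₂).symm
  rw [tsum_reward_sub_sub_eq hγ0 hγ1 (hdsucc π₁) (hdsucc π₂) (hprob hπ₁) (hprob hπ₂)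
    (fun s => (hπ₁ s).2) (fun s => (hπ₂ s).2) hQ h0]
  refine (abs_tsum_le_of_abs_le_mul_coe_mul_geometric hγ0 hγ1 (K := 2 * α * ε)
    fun t => ?_).trans_eq (by ring)
  have hdist := sum_abs_sub_le_nat_mul hPtr hπ₁ (hprob hπ₂) (hdsucc π₁) (hdsucc π₂) h0 hTV t
  rw [abs_mul, abs_of_nonneg (pow_nonneg hγ0 t)]
  calc γ ^ t * |∑ s, (d π₁ t s - d π₂ t s) * g s|
      ≤ γ ^ t * ((t * (2 * α)) * ε) := by
        gcongr
        exact (abs_sum_mul_le_sum_abs_mul hg).trans (mul_le_mul_of_nonneg_right hdist hε0)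
    _ = 2 * α * ε * (t * γ ^ t) := by ring

/-- On-policy regret bound: for `π₂` optimal under entropy-regularized RL with reward `r`,
    `|U_r(π₁) − U_r(π₂) − Σ_t γ^t E_{s_t∼π₁}[ΔA(s_t)]| ≤ 2αγε/(1−γ)²`. -/
theorem regret_bound_on_policy {S A : Type*} [Fintype S] [Nonempty S] [Fintype A] [Nonempty A]
    (γ : ℝ) (hγ0 : 0 ≤ γ) (hγ1 : γ < 1)
    (r : S → A → ℝ) (d0 : S → ℝ) (Ptr : S → A → S → ℝ)
    (hd0 : (∀ s, 0 ≤ d0 s) ∧ ∑ s, d0 s = 1)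
    (hPtr : ∀ s a, (∀ s', 0 ≤ Ptr s a s') ∧ ∑ s', Ptr s a s' = 1)
    (π₁ π₂ : S → A → ℝ)
    (hπ₁ : ∀ s, (∀ a, 0 ≤ π₁ s a) ∧ ∑ a, π₁ s a = 1)
    (hπ₂ : ∀ s, (∀ a, 0 ≤ π₂ s a) ∧ ∑ a, π₂ s a = 1)
    (d : (S → A → ℝ) → ℕ → S → ℝ)
    (hdzero : ∀ π, d π 0 = d0)
    (hdsucc : ∀ π t s', d π (t + 1) s' = ∑ s, ∑ a, d π t s * π s a * Ptr s a s')
    (Hloc : (S → A → ℝ) → S → ℝ)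
    (hHloc : ∀ π s, Hloc π s = ∑ a, -(π s a * Real.log (π s a)))
    -- soft value functions of π₂
    (Q : S → A → ℝ) (V : S → ℝ)
    (hQ : ∀ s a, Q s a = r s a + γ * ∑ s', Ptr s a s' * V s')
    (hV : ∀ s, V s = (∑ a, π₂ s a * Q s a) + Hloc π₂ s)
    -- π₂ is optimal for entropy-regularized RL under r
    (hopt : ∀ π : S → A → ℝ, (∀ s, (∀ a, 0 ≤ π s a) ∧ ∑ a, π s a = 1) →
        (∑' t : ℕ, γ ^ t * ∑ s, ∑ a, d π t s * π s a * r s a)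
          + (∑' t : ℕ, γ ^ t * ∑ s, d π t s * Hloc π s)
        ≤ (∑' t : ℕ, γ ^ t * ∑ s, ∑ a, d π₂ t s * π₂ s a * r s a)
          + (∑' t : ℕ, γ ^ t * ∑ s, d π₂ t s * Hloc π₂ s))
    -- α : maximal total-variation distance between π₁ and π₂; ε : maximal |A_{π₂}|
    (α ε : ℝ)
    (hα : α = univ.sup' univ_nonempty (fun s => (∑ a, |π₁ s a - π₂ s a|) / 2))
    (hε : ε = univ.sup' univ_nonempty
        (fun s => univ.sup' univ_nonempty (fun a => |Q s a - V s|))) :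
    |((∑' t : ℕ, γ ^ t * ∑ s, ∑ a, d π₁ t s * π₁ s a * r s a)
        - (∑' t : ℕ, γ ^ t * ∑ s, ∑ a, d π₂ t s * π₂ s a * r s a))
      - (∑' t : ℕ, γ ^ t * ∑ s, d π₁ t s *
          (∑ a, (π₁ s a - π₂ s a) * (Q s a - V s)))|
      ≤ 2 * α * γ * ε / (1 - γ) ^ 2 :=
  regret_bound_on_policy_general γ hγ0 hγ1 r d0 Ptr hd0 hPtr π₁ π₂ hπ₁ hπ₂ d hdzero hdsucc Q V hQ α
    ε hα hε
end

section
/- Success guarantee from δ-optimality gap (Proposition): Suppose Max-Margin IRL reaches a Nash equilibrium at (r*, π_{r*}), i.e., π_{r*} ∈ argmax_π U_{r*}(π) and for every reward r and every π, max_{π'} U_r(π') − U_r(π_{r*}) ≤ δ* − (U_r(E) − max_{π'} U_r(π')), where δ* = U_{r*}(E) − max_π U_{r*}(π). If r* is aligned with the task with success interval S_{r*}, and δ ≥ δ* − (sup S_{r*} − inf S_{r*}), then the optimal protagonist policy π_P = MinimaxRegret(R_{E,δ}) satisfies U_{r*}(π_P) ∈ S_{r*}, i.e., π_P succeeds in the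 task. -/
open Finset

/-- Success guarantee from the δ-optimality gap: if Max-Margin IRL reaches a Nash
    equilibrium at `(r*, π_{r*})`, `r*` is task-aligned with success interval
    `[loS, hiS]`, and `δ ≥ δ* − (hiS − loS)`, then the minimax-regret protagonist
    policy over `R_{E,δ}` succeeds in the task. -/
theorem success_from_delta_gap {P R : Type*} [Fintype P] [Fintype R] [Nonempty P] [Nonempty R]
    (U : R → P → ℝ) (UE : R → ℝ) (Φ : P → Prop)
    (rstar : R) (πrstar : P) (δstar δ : ℝ)
    (hδstar : δstar = UE rstar - univ.sup' univ_nonempty (fun π => U rstar π))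
    (hopt : U rstar πrstar = univ.sup' univ_nonempty (fun π => U rstar π))
    (hNash : ∀ r : R,
        univ.sup' univ_nonempty (fun π => U r π) - U r πrstar
          ≤ δstar - (UE r - univ.sup' univ_nonempty (fun π => U r π)))
    (loS hiS : ℝ) (hS : loS ≤ hiS)
    (hsupS : hiS = univ.sup' univ_nonempty (fun π => U rstar π))
    (hΦ : ∀ π : P, U rstar π ∈ Set.Icc loS hiS → Φ π)
    (hδ : δstar - (hiS - loS) ≤ δ) (hδle : δ ≤ δstar)
    (Rδ : Finset R)
    (hRδ : ∀ r : R, r ∈ Rδ ↔ δ ≤ UE r - univ.sup' univ_nonempty (fun π => U r π))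
    (hRδne : Rδ.Nonempty)
    (πP : P)
    (hπP : ∀ π : P,
        Rδ.sup' hRδne (fun r => univ.sup' univ_nonempty (fun π' => U r π') - U r πP)
        ≤ Rδ.sup' hRδne (fun r => univ.sup' univ_nonempty (fun π' => U r π') - U r π)) :
    U rstar πP ∈ Set.Icc loS hiS ∧ Φ πP := by
  have hrstar : rstar ∈ Rδ := (hRδ rstar).2 (by rw [← hδstar]; exact hδle)
  -- upper bound
  have hub : U rstar πP ≤ hiS := by
    rw [hsupS]
    exact Finset.le_sup' (fun π => U rstar π) (Finset.mem_univ πP)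
  -- regret of πrstar ≤ δstar - δ over Rδ
  have hbound : Rδ.sup' hRδne (fun r => univ.sup' univ_nonempty (fun π' => U r π') - U r πP)
      ≤ δstar - δ := by
    refine le_trans (hπP πrstar) ?_
    apply Finset.sup'_le
    intro r hr
    have h1 := hNash r
    have h2 := (hRδ r).1 hr
    linarith
  have hkey : hiS - U rstar πP ≤ δstar - δ := by
    refine le_trans ?_ hbound
    rw [hsupS]
    exact Finset.le_sup' (fun r => univ.sup' univ_nonempty (fun π' => U r π') - U r πP) hrstar
  have hmem : U rstar πP ∈ Set.Icc loS hiS := ⟨by linarith, hub⟩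
  exact ⟨hmem, hΦ πP hmem⟩
end
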